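/- Every ⊕-abstraction P' of an AC-MAS P is uniform. -/

import Mathlib

/-!  Common formalisation of artifact-centric multi-agent systems (AC-MAS). -/

open Set

/-- A database schema: a finite type of relation symbols, each with an arity. -/
structure Schema : Type 1 where
  Rel : Type
  [relFin : Fintype Rel]
  arity : Rel → ℕ

attribute [instance] Schema.relFin

/-- A `D`-instance over an interpretation domain `U`: every relation symbol is
interpreted as a finite set of tuples over `U`. -/
structure Inst (D : Schema) (U : Type) : Type where
  rel : ∀ r : D.Rel, Set (Fin (D.arity r) → U)
  finite : ∀ r, (rel r).Finite

/-- The active domain of an instance. -/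
def Inst.adom {D : Schema} {U : Type} (I : Inst D U) : Set U :=
  { u | ∃ (r : D.Rel) (t : Fin (D.arity r) → U), t ∈ I.rel r ∧ ∃ j, t j = u }

/-- The schema `D` together with a primed copy of every relation symbol. -/
def Schema.double (D : Schema) : Schema where
  Rel := D.Rel ⊕ D.Rel
  relFin := inferInstance
  arity := Sum.elim D.arity D.arity

/-- The disjunctive join `I ⊕ J`: unprimed symbols are interpreted as in `I`,
primed symbols as in `J`. -/
def Inst.oplus {D : Schema} {U : Type} (I J : Inst D U) : Inst D.double U where
  rel := fun r => match r with
    | .inl r₀ => I.rel r₀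
    | .inr r₀ => J.rel r₀
  finite := fun r => by
    cases r with
    | inl r₀ => exact I.finite r₀
    | inr r₀ => exact J.finite r₀

/-- Image of an instance under a map of domains. -/
def Inst.map {D : Schema} {C U : Type} (f : C → U) (I : Inst D C) : Inst D U where
  rel := fun r => (fun t => f ∘ t) '' I.rel r
  finite := fun r => (I.finite r).image _

/-! ### First-order formulas -/

/-- Terms: variables (natural numbers) or constants from `C`. -/
abbrev Term (C : Type) := ℕ ⊕ C

def Term.varsF {C : Type} : Term C → Finset ℕ
  | .inl x => {x}
  | .inr _ => ∅

def Term.constsS {C : Type} : Term C → Set C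
  | .inl _ => ∅
  | .inr c => {c}

def Term.val {C U : Type} (cst : C → U) (σ : ℕ → U) : Term C → U
  | .inl x => σ x
  | .inr c => cst c

/-- First-order formulas over schema `D`, with equality, constants from `C`
and no function symbols. -/
inductive FO (D : Schema) (C : Type) : Type where
  | eq : Term C → Term C → FO D C
  | rel : (r : D.Rel) → (Fin (D.arity r) → Term C) → FO D C
  | not : FO D C → FO D C
  | imp : FO D C → FO D C → FO D C
  | all : ℕ → FO D C → FO D C

namespace FO

variable {D : Schema} {C : Type}

/-- Free variables. -/
def free : FO D C → Finset ℕ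
  | .eq t₁ t₂ => t₁.varsF ∪ t₂.varsF
  | .rel _ ts => Finset.univ.biUnion fun j => (ts j).varsF
  | .not φ => φ.free
  | .imp φ ψ => φ.free ∪ ψ.free
  | .all x φ => φ.free.erase x

/-- All variables. -/
def vars : FO D C → Finset ℕ
  | .eq t₁ t₂ => t₁.varsF ∪ t₂.varsF
  | .rel _ ts => Finset.univ.biUnion fun j => (ts j).varsF
  | .not φ => φ.vars
  | .imp φ ψ => φ.vars ∪ ψ.vars
  | .all x φ => insert x φ.vars

/-- Constants mentioned in a formula. -/
def consts : FO D C → Set C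
  | .eq t₁ t₂ => t₁.constsS ∪ t₂.constsS
  | .rel _ ts => ⋃ j, (ts j).constsS
  | .not φ => φ.consts
  | .imp φ ψ => φ.consts ∪ ψ.consts
  | .all _ φ => φ.consts

/-- The formula mentions only relation symbols from `R`. -/
def UsesOnly (R : Set D.Rel) : FO D C → Prop
  | .eq _ _ => True
  | .rel r _ => r ∈ R
  | .not φ => φ.UsesOnly R
  | .imp φ ψ => φ.UsesOnly R ∧ ψ.UsesOnly R
  | .all _ φ => φ.UsesOnly R

/-- Satisfaction of FO-formulas, with active-domain quantification. -/
def sat {U : Type} (cst : C → U) (I : Inst D U) : (ℕ → U) → FO D C → Prop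
  | σ, .eq t₁ t₂ => t₁.val cst σ = t₂.val cst σ
  | σ, .rel r ts => (fun j => (ts j).val cst σ) ∈ I.rel r
  | σ, .not φ => ¬ sat cst I σ φ
  | σ, .imp φ ψ => sat cst I σ φ → sat cst I σ ψ
  | σ, .all x φ => ∀ u ∈ I.adom, sat cst I (Function.update σ x u) φ

end FO

/-! ### Agents and AC-MAS -/

/-- The signature of an agent: a finite set of action types with parameter counts. -/
structure AgentSig : Type 1 where
  Act : Type
  [actFin : Fintype Act]
  np : Act → ℕ

attribute [instance] AgentSig.actFin

/-- A ground action: an action type together with ground parameters. -/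
def GAct (g : AgentSig) (U : Type) : Type := Σ a : g.Act, Fin (g.np a) → U

/-- Renaming of ground-action parameters. -/
def GAct.map {g : AgentSig} {U U' : Type} (f : U → U') : GAct g U → GAct g U'
  | ⟨a, u⟩ => ⟨a, fun j => f (u j)⟩

/-- An agent: local states structured as database instances, and a protocol. -/
structure Agent (D : Schema) (g : AgentSig) (U : Type) : Type where
  L : Set (Inst D U)
  Pr : Inst D U → Set (GAct g U)

/-- A global state: one local database instance per agent `0, …, n`
(agent `0` is the environment). -/
abbrev GState (D : Schema) (n : ℕ) (U : Type) := Fin (n+1) → Inst D U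

/-- A joint (global) ground action. -/
abbrev JAct {n : ℕ} (sig : Fin (n+1) → AgentSig) (U : Type) : Type := ∀ i, GAct (sig i) U

def JAct.map {n : ℕ} {sig : Fin (n+1) → AgentSig} {U U' : Type} (f : U → U')
    (a : JAct sig U) : JAct sig U' := fun i => (a i).map f

/-- The set of individuals occurring as parameters of a joint ground action. -/
def actElems {n : ℕ} {sig : Fin (n+1) → AgentSig} {U : Type} (a : JAct sig U) : Set U :=
  { u | ∃ (i : Fin (n+1)) (j : Fin ((sig i).np (a i).1)), (a i).2 j = u }

/-- Active domain of a family of instances (e.g. a global state). -/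
def adomF {D : Schema} {X U : Type} (s : X → Inst D U) : Set U := ⋃ i, (s i).adom

/-- The global instance `D_s` associated with a global state. -/
def gInst {D : Schema} {n : ℕ} {U : Type} (s : GState D n U) : Inst D U where
  rel := fun r => ⋃ i, (s i).rel r
  finite := fun r => Set.finite_iUnion fun i => (s i).finite r

/-- Componentwise disjunctive join of two global states. -/
def oplusG {D : Schema} {n : ℕ} {U : Type} (s t : GState D n U) : GState D.double n U :=
  fun i => (s i).oplus (t i)

/-- An artifact-centric multi-agent system. -/
structure ACMAS (D : Schema) {n : ℕ} (sig : Fin (n+1) → AgentSig) {U : Type}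
    (Ag : ∀ i, Agent D (sig i) U) : Type where
  /-- set of (reachable) global states -/
  S : Set (GState D n U)
  /-- initial global state -/
  s0 : GState D n U
  s0_mem : s0 ∈ S
  states_local : ∀ s ∈ S, ∀ i, s i ∈ (Ag i).L
  /-- global transition function -/
  τ : GState D n U → JAct sig U → Set (GState D n U)
  /-- `τ` is defined only on protocol-enabled joint actions -/
  tau_enabled : ∀ s a, (τ s a).Nonempty → ∀ i, a i ∈ (Ag i).Pr (s i)
  tau_closed : ∀ s ∈ S, ∀ a, τ s a ⊆ S

namespace ACMAS

variable {D : Schema} {n : ℕ} {sig : Fin (n+1) → AgentSig} {U : Type}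
  {Ag : ∀ i, Agent D (sig i) U}

/-- The transition relation `s → t`. -/
def Tr (M : ACMAS D sig Ag) (s t : GState D n U) : Prop := ∃ a, t ∈ M.τ s a

/-- Epistemic indistinguishability for agent `i`. -/
def Epi (M : ACMAS D sig Ag) (i : Fin (n+1)) (s t : GState D n U) : Prop :=
  s ∈ M.S ∧ t ∈ M.S ∧ s i = t i

/-- Union of the epistemic relations of agents `1, …, n`. -/
def EpiAny (M : ACMAS D sig Ag) (s t : GState D n U) : Prop :=
  ∃ i : Fin n, M.Epi i.succ s t

/-- The standard assumptions: the transition relation is serial and `S` is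
exactly the set of states reachable from `s0`. -/
def Std (M : ACMAS D sig Ag) : Prop :=
  (∀ s ∈ M.S, ∃ t, M.Tr s t) ∧ M.S = { s | Relation.ReflTransGen M.Tr M.s0 s }

/-- An (infinite) run. -/
def IsRun (M : ACMAS D sig Ag) (r : ℕ → GState D n U) : Prop :=
  (∀ k, r k ∈ M.S) ∧ ∀ k, M.Tr (r k) (r (k+1))

/-- A temporal-epistemic run. -/
def IsTERun (M : ACMAS D sig Ag) (r : ℕ → GState D n U) : Prop :=
  (∀ k, r k ∈ M.S) ∧ ∀ k, M.Tr (r k) (r (k+1)) ∨ M.EpiAny (r k) (r (k+1))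

end ACMAS

/-! ### Isomorphisms and equivalent assignments -/

/-- `ι` is a witness for the isomorphism of the families `s` and `s'`:
a constant-preserving bijection between the active domains extended with the
constants, preserving all relations componentwise. -/
def IsWitness {D : Schema} {X C U U' : Type} (cst : C → U) (cst' : C → U')
    (ι : U → U') (s : X → Inst D U) (s' : X → Inst D U') : Prop :=
  Set.BijOn ι (adomF s ∪ Set.range cst) (adomF s' ∪ Set.range cst') ∧
  (∀ c, ι (cst c) = cst' c) ∧
  ∀ (i : X) (r : D.Rel) (t : Fin (D.arity r) → U),
    (∀ j, t j ∈ adomF s ∪ Set.range cst) →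
    (t ∈ (s i).rel r ↔ (fun j => ι (t j)) ∈ (s' i).rel r)

/-- Isomorphism of families of instances (in particular global states). -/
def Iso {D : Schema} {X C U U' : Type} (cst : C → U) (cst' : C → U')
    (s : X → Inst D U) (s' : X → Inst D U') : Prop :=
  ∃ ι, IsWitness cst cst' ι s s'

/-- Equivalent assignments for a set `V` of variables w.r.t. `s` and `s'`. -/
def EqAssign {D : Schema} {n : ℕ} {C U U' : Type} (cst : C → U) (cst' : C → U')
    (V : Set ℕ) (σ : ℕ → U) (σ' : ℕ → U')
    (s : GState D n U) (s' : GState D n U') : Prop :=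
  ∃ γ : U → U',
    Set.BijOn γ (adomF s ∪ Set.range cst ∪ σ '' V)
      (adomF s' ∪ Set.range cst' ∪ σ' '' V) ∧
    IsWitness cst cst' γ s s' ∧
    ∀ x ∈ V, σ' x = γ (σ x)

/-! ### Simulations and bisimulations -/

section Bisim

variable {D : Schema} {n : ℕ} {sig sig' : Fin (n+1) → AgentSig} {C U U' : Type}
  {Ag : ∀ i, Agent D (sig i) U} {Ag' : ∀ i, Agent D (sig' i) U'}

/-- Simulation between two AC-MAS. -/
def IsSim (cst : C → U) (cst' : C → U')
    (M : ACMAS D sig Ag) (M' : ACMAS D sig' Ag')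
    (R : GState D n U → GState D n U' → Prop) : Prop :=
  ∀ s s', R s s' →
    s ∈ M.S ∧ s' ∈ M'.S ∧ Iso cst cst' s s' ∧
    ∀ t, M.Tr s t → ∃ t', M'.Tr s' t' ∧ R t t'

/-- Bisimulation. -/
def IsBisim (cst : C → U) (cst' : C → U')
    (M : ACMAS D sig Ag) (M' : ACMAS D sig' Ag')
    (R : GState D n U → GState D n U' → Prop) : Prop :=
  IsSim cst cst' M M' R ∧ IsSim cst' cst M' M (fun s' s => R s s')

/-- Bisimilarity of states. -/
def Bisimilar (cst : C → U) (cst' : C → U')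
    (M : ACMAS D sig Ag) (M' : ACMAS D sig' Ag')
    (s : GState D n U) (s' : GState D n U') : Prop :=
  ∃ R, IsBisim cst cst' M M' R ∧ R s s'

/-- `P ≈ P'`: the two systems are bisimilar. -/
def BisimSys (cst : C → U) (cst' : C → U')
    (M : ACMAS D sig Ag) (M' : ACMAS D sig' Ag') : Prop :=
  Bisimilar cst cst' M M' M.s0 M'.s0

/-- ⊕-simulation. -/
def IsOSim (cst : C → U) (cst' : C → U')
    (M : ACMAS D sig Ag) (M' : ACMAS D sig' Ag')
    (R : GState D n U → GState D n U' → Prop) : Prop :=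
  ∀ s s', R s s' →
    s ∈ M.S ∧ s' ∈ M'.S ∧ Iso cst cst' s s' ∧
    (∀ t, M.Tr s t → ∃ t', M'.Tr s' t' ∧
        Iso cst cst' (oplusG s t) (oplusG s' t') ∧ R t t') ∧
    (∀ (t : GState D n U) (i : Fin n), M.Epi i.succ s t →
        ∃ t', M'.Epi i.succ s' t' ∧
          Iso cst cst' (oplusG s t) (oplusG s' t') ∧ R t t')

/-- ⊕-bisimulation. -/
def IsOBisim (cst : C → U) (cst' : C → U')
    (M : ACMAS D sig Ag) (M' : ACMAS D sig' Ag')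
    (R : GState D n U → GState D n U' → Prop) : Prop :=
  IsOSim cst cst' M M' R ∧ IsOSim cst' cst M' M (fun s' s => R s s')

/-- ⊕-bisimilarity of states. -/
def OBisimilar (cst : C → U) (cst' : C → U')
    (M : ACMAS D sig Ag) (M' : ACMAS D sig' Ag')
    (s : GState D n U) (s' : GState D n U') : Prop :=
  ∃ R, IsOBisim cst cst' M M' R ∧ R s s'

/-- The two systems are ⊕-bisimilar. -/
def OBisimSys (cst : C → U) (cst' : C → U')
    (M : ACMAS D sig Ag) (M' : ACMAS D sig' Ag') : Prop :=
  OBisimilar cst cst' M M' M.s0 M'.s0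

end Bisim

/-! ### Uniformity and boundedness -/

section Uniform

variable {D : Schema} {n : ℕ} {sig : Fin (n+1) → AgentSig} {C U : Type}
  {Ag : ∀ i, Agent D (sig i) U}

/-- Temporal condition (1) of uniformity. -/
def UniformT (cst : C → U) (M : ACMAS D sig Ag) : Prop :=
  ∀ s ∈ M.S, ∀ t ∈ M.S, ∀ s' ∈ M.S, ∀ (t' : GState D n U) (a : JAct sig U),
    t ∈ M.τ s a →
    ∀ ι : U → U, IsWitness cst cst ι (oplusG s t) (oplusG s' t') →
    ∀ ι' : U → U,
      (∀ u ∈ adomF (oplusG s t) ∪ Set.range cst, ι' u = ι u) →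
      Set.InjOn ι' (adomF (oplusG s t) ∪ Set.range cst ∪ actElems a) →
      (∀ c, ι' (cst c) = cst c) →
      t' ∈ M.τ s' (JAct.map ι' a)

/-- Epistemic condition (2) of uniformity. -/
def UniformE (cst : C → U) (M : ACMAS D sig Ag) : Prop :=
  ∀ s ∈ M.S, ∀ t ∈ M.S, ∀ s' ∈ M.S, ∀ (t' : GState D n U) (i : Fin n),
    M.Epi i.succ s t → Iso cst cst (oplusG s t) (oplusG s' t') →
    M.Epi i.succ s' t'

/-- Uniform AC-MAS. -/
def Uniform (cst : C → U) (M : ACMAS D sig Ag) : Prop :=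
  UniformT cst M ∧ UniformE cst M

/-- `b`-bounded AC-MAS: no reachable state has more than `b` distinct elements
in its active domain. -/
def BBounded (M : ACMAS D sig Ag) (b : ℕ) : Prop :=
  ∀ s ∈ M.S, (adomF s).Finite ∧ (adomF s).ncard ≤ b

end Uniform

/-- `N_Ag`: the sum over the agents of the maximal number of parameters of
their action types. -/
def NAg {n : ℕ} (sig : Fin (n+1) → AgentSig) : ℕ :=
  ∑ i, Finset.univ.sup (sig i).np

/-! ### Abstractions -/

section Abstraction

variable {D : Schema} {n : ℕ} {sig : Fin (n+1) → AgentSig} {C U U' : Type}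
  {Ag : ∀ i, Agent D (sig i) U} {Ag' : ∀ i, Agent D (sig i) U'}

/-- `A'` is the abstract agent corresponding to `A`, over the domain `U'`. -/
def IsAbstractAgent {g : AgentSig} (cst : C → U) (cst' : C → U')
    (A : Agent D g U) (A' : Agent D g U') : Prop :=
  ∀ (l' : Inst D U') (α' : GAct g U'), α' ∈ A'.Pr l' ↔
    ∃ l ∈ A.L, ∃ α ∈ A.Pr l, ∃ ι : U → U',
      IsWitness cst cst' ι (fun _ : PUnit => l) (fun _ : PUnit => l') ∧
      ∃ ι' : U → U',
        (∀ u ∈ l.adom ∪ Set.range cst, ι' u = ι u) ∧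
        Set.InjOn ι' (l.adom ∪ Set.range cst ∪ Set.range α.2) ∧
        α' = α.map ι'

/-- `M'` is an abstraction of `M` (over the abstract agents `Ag'`). -/
def IsAbstraction (cst : C → U) (cst' : C → U')
    (M : ACMAS D sig Ag) (M' : ACMAS D sig Ag') : Prop :=
  (∀ i, IsAbstractAgent cst cst' (Ag i) (Ag' i)) ∧
  Iso cst' cst M'.s0 M.s0 ∧
  ∀ (s' t' : GState D n U') (a' : JAct sig U'),
    t' ∈ M'.τ s' a' ↔
      ∃ s ∈ M.S, ∃ t ∈ M.S, ∃ a : JAct sig U, t ∈ M.τ s a ∧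
        ∃ ι : U → U', IsWitness cst cst' ι s s' ∧ IsWitness cst cst' ι t t' ∧
          ∃ ι' : U → U',
            (∀ u ∈ adomF s ∪ adomF t ∪ Set.range cst, ι' u = ι u) ∧
            Set.InjOn ι' (adomF s ∪ adomF t ∪ Set.range cst ∪ actElems a) ∧
            a' = JAct.map ι' a

/-- `M'` is a ⊕-abstraction of `M` (over the abstract agents `Ag'`).
The requirement `s0' = s0` is rendered, across the two interpretation
domains, as: the initial states are isomorphic and `adom(s0) ⊆ C`. -/
def IsOAbstraction (cst : C → U) (cst' : C → U')
    (M : ACMAS D sig Ag) (M' : ACMAS D sig Ag') : Prop :=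
  (∀ i, IsAbstractAgent cst cst' (Ag i) (Ag' i)) ∧
  (Iso cst cst' M.s0 M'.s0 ∧ adomF M.s0 ⊆ Set.range cst) ∧
  ∀ (s' t' : GState D n U') (a' : JAct sig U'),
    t' ∈ M'.τ s' a' ↔
      ∃ s ∈ M.S, ∃ t ∈ M.S, ∃ a : JAct sig U, t ∈ M.τ s a ∧
        ∃ ι : U → U',
          IsWitness cst cst' ι (oplusG s t) (oplusG s' t') ∧
          ∃ ι' : U → U',
            (∀ u ∈ adomF (oplusG s t) ∪ Set.range cst, ι' u = ι u) ∧
            Set.InjOn ι' (adomF (oplusG s t) ∪ Set.range cst ∪ actElems a) ∧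
            a' = JAct.map ι' a

end Abstraction

/-! ### Temporal-epistemic specification languages -/

/-- Sentence-atomic FO-CTL formulas. -/
inductive SAFOCTL (D : Schema) (C : Type) : Type where
  | atom : (ψ : FO D C) → ψ.free = ∅ → SAFOCTL D C
  | not : SAFOCTL D C → SAFOCTL D C
  | imp : SAFOCTL D C → SAFOCTL D C → SAFOCTL D C
  | ax : SAFOCTL D C → SAFOCTL D C
  | au : SAFOCTL D C → SAFOCTL D C → SAFOCTL D C
  | eu : SAFOCTL D C → SAFOCTL D C → SAFOCTL D C

/-- Satisfaction of SA-FO-CTL formulas at a global state. -/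
def SAFOCTL.sat {D : Schema} {C : Type} {n : ℕ} {sig : Fin (n+1) → AgentSig}
    {U : Type} {Ag : ∀ i, Agent D (sig i) U}
    (cst : C → U) (M : ACMAS D sig Ag) :
    SAFOCTL D C → GState D n U → Prop
  | .atom ψ _, s => ∀ σ, FO.sat cst (gInst s) σ ψ
  | .not φ, s => ¬ SAFOCTL.sat cst M φ s
  | .imp φ ψ, s => SAFOCTL.sat cst M φ s → SAFOCTL.sat cst M ψ s
  | .ax φ, s => ∀ r, M.IsRun r → r 0 = s → SAFOCTL.sat cst M φ (r 1)
  | .au φ ψ, s => ∀ r, M.IsRun r → r 0 = s →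
      ∃ k, SAFOCTL.sat cst M ψ (r k) ∧ ∀ j < k, SAFOCTL.sat cst M φ (r j)
  | .eu φ ψ, s => ∃ r, M.IsRun r ∧ r 0 = s ∧
      ∃ k, SAFOCTL.sat cst M ψ (r k) ∧ ∀ j < k, SAFOCTL.sat cst M φ (r j)

/-- `P ⊨ φ` for SA-FO-CTL. -/
def SAFOCTL.satM {D : Schema} {C : Type} {n : ℕ} {sig : Fin (n+1) → AgentSig}
    {U : Type} {Ag : ∀ i, Agent D (sig i) U}
    (cst : C → U) (M : ACMAS D sig Ag) (φ : SAFOCTL D C) : Prop :=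
  SAFOCTL.sat cst M φ M.s0

/-- FO-CTLK formulas, with epistemic operators for agents `1, …, n` and
common knowledge. -/
inductive FOCTLK (D : Schema) (C : Type) (n : ℕ) : Type where
  | atom : FO D C → FOCTLK D C n
  | not : FOCTLK D C n → FOCTLK D C n
  | imp : FOCTLK D C n → FOCTLK D C n → FOCTLK D C n
  | all : ℕ → FOCTLK D C n → FOCTLK D C n
  | ax : FOCTLK D C n → FOCTLK D C n
  | au : FOCTLK D C n → FOCTLK D C n → FOCTLK D C n
  | eu : FOCTLK D C n → FOCTLK D C n → FOCTLK D C n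
  | know : Fin n → FOCTLK D C n → FOCTLK D C n
  | ck : FOCTLK D C n → FOCTLK D C n

namespace FOCTLK

variable {D : Schema} {C : Type} {n : ℕ}

def free : FOCTLK D C n → Finset ℕ
  | .atom ψ => ψ.free
  | .not φ => φ.free
  | .imp φ ψ => φ.free ∪ ψ.free
  | .all x φ => φ.free.erase x
  | .ax φ => φ.free
  | .au φ ψ => φ.free ∪ ψ.free
  | .eu φ ψ => φ.free ∪ ψ.free
  | .know _ φ => φ.free
  | .ck φ => φ.free

def vars : FOCTLK D C n → Finset ℕ
  | .atom ψ => ψ.vars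
  | .not φ => φ.vars
  | .imp φ ψ => φ.vars ∪ ψ.vars
  | .all x φ => insert x φ.vars
  | .ax φ => φ.vars
  | .au φ ψ => φ.vars ∪ ψ.vars
  | .eu φ ψ => φ.vars ∪ ψ.vars
  | .know _ φ => φ.vars
  | .ck φ => φ.vars

/-- Satisfaction `(P, s, σ) ⊨ φ` of FO-CTLK formulas. -/
def sat {sig : Fin (n+1) → AgentSig} {U : Type} {Ag : ∀ i, Agent D (sig i) U}
    (cst : C → U) (M : ACMAS D sig Ag) :
    FOCTLK D C n → GState D n U → (ℕ → U) → Prop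
  | .atom ψ, s, σ => FO.sat cst (gInst s) σ ψ
  | .not φ, s, σ => ¬ sat cst M φ s σ
  | .imp φ ψ, s, σ => sat cst M φ s σ → sat cst M ψ s σ
  | .all x φ, s, σ => ∀ u ∈ adomF s, sat cst M φ s (Function.update σ x u)
  | .ax φ, s, σ => ∀ r, M.IsRun r → r 0 = s → sat cst M φ (r 1) σ
  | .au φ ψ, s, σ => ∀ r, M.IsRun r → r 0 = s →
      ∃ k, sat cst M ψ (r k) σ ∧ ∀ j < k, sat cst M φ (r j) σ
  | .eu φ ψ, s, σ => ∃ r, M.IsRun r ∧ r 0 = s ∧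
      ∃ k, sat cst M ψ (r k) σ ∧ ∀ j < k, sat cst M φ (r j) σ
  | .know i φ, s, σ => ∀ t, M.Epi i.succ s t → sat cst M φ t σ
  | .ck φ, s, σ => ∀ t, Relation.TransGen M.EpiAny s t → sat cst M φ t σ

/-- `P ⊨ φ` for FO-CTLK: satisfaction at the initial state under every
assignment. -/
def satM {sig : Fin (n+1) → AgentSig} {U : Type} {Ag : ∀ i, Agent D (sig i) U}
    (cst : C → U) (M : ACMAS D sig Ag) (φ : FOCTLK D C n) : Prop :=
  ∀ σ : ℕ → U, sat cst M φ M.s0 σ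

end FOCTLK

/-- FO-ECTLK: the existential fragment. -/
inductive FOECTLK (D : Schema) (C : Type) (n : ℕ) : Type where
  | atom : FO D C → FOECTLK D C n
  | and : FOECTLK D C n → FOECTLK D C n → FOECTLK D C n
  | or : FOECTLK D C n → FOECTLK D C n → FOECTLK D C n
  | all : ℕ → FOECTLK D C n → FOECTLK D C n
  | ex : ℕ → FOECTLK D C n → FOECTLK D C n
  | enext : FOECTLK D C n → FOECTLK D C n
  | eu : FOECTLK D C n → FOECTLK D C n → FOECTLK D C n
  | dknow : Fin n → FOECTLK D C n → FOECTLK D C n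
  | dck : FOECTLK D C n → FOECTLK D C n

/-- Satisfaction of FO-ECTLK formulas. -/
def FOECTLK.sat {D : Schema} {C : Type} {n : ℕ} {sig : Fin (n+1) → AgentSig}
    {U : Type} {Ag : ∀ i, Agent D (sig i) U}
    (cst : C → U) (M : ACMAS D sig Ag) :
    FOECTLK D C n → GState D n U → (ℕ → U) → Prop
  | .atom ψ, s, σ => FO.sat cst (gInst s) σ ψ
  | .and φ ψ, s, σ => FOECTLK.sat cst M φ s σ ∧ FOECTLK.sat cst M ψ s σ
  | .or φ ψ, s, σ => FOECTLK.sat cst M φ s σ ∨ FOECTLK.sat cst M ψ s σ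
  | .all x φ, s, σ => ∀ u ∈ adomF s, FOECTLK.sat cst M φ s (Function.update σ x u)
  | .ex x φ, s, σ => ∃ u ∈ adomF s, FOECTLK.sat cst M φ s (Function.update σ x u)
  | .enext φ, s, σ => ∃ r, M.IsRun r ∧ r 0 = s ∧ FOECTLK.sat cst M φ (r 1) σ
  | .eu φ ψ, s, σ => ∃ r, M.IsRun r ∧ r 0 = s ∧
      ∃ k, FOECTLK.sat cst M ψ (r k) σ ∧ ∀ j < k, FOECTLK.sat cst M φ (r j) σ
  | .dknow i φ, s, σ => ∃ t, M.Epi i.succ s t ∧ FOECTLK.sat cst M φ t σ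
  | .dck φ, s, σ => ∃ t, Relation.TransGen M.EpiAny s t ∧ FOECTLK.sat cst M φ t σ

/-- `P ⊨ φ` for FO-ECTLK. -/
def FOECTLK.satM {D : Schema} {C : Type} {n : ℕ} {sig : Fin (n+1) → AgentSig}
    {U : Type} {Ag : ∀ i, Agent D (sig i) U}
    (cst : C → U) (M : ACMAS D sig Ag) (φ : FOECTLK D C n) : Prop :=
  ∀ σ : ℕ → U, FOECTLK.sat cst M φ M.s0 σ

/-- `Mb` is the `b`-restriction of `M`. -/
def IsBRestriction {D : Schema} {n : ℕ} {sig : Fin (n+1) → AgentSig} {U : Type}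
    {Ag : ∀ i, Agent D (sig i) U} (Mb M : ACMAS D sig Ag) (b : ℕ) : Prop :=
  Mb.s0 = M.s0 ∧
  Mb.S = { s ∈ M.S | (adomF s).Finite ∧ (adomF s).ncard ≤ b } ∧
  ∀ s a, Mb.τ s a = { t ∈ M.τ s a | s ∈ Mb.S ∧ t ∈ Mb.S }

/-! ### Artifact-centric programs -/

/-- A declarative artifact-centric program. -/
structure ACProgram (D : Schema) (C : Type) {n : ℕ} (sig : Fin (n+1) → AgentSig) where
  /-- local database schemas, as sets of relation symbols -/
  locRel : Fin (n+1) → Set D.Rel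
  locDisj : ∀ i j, i ≠ j → Disjoint (locRel i) (locRel j)
  /-- initial local states; their values are constants -/
  l0 : ∀ _ : Fin (n+1), Inst D C
  l0_loc : ∀ i r, r ∉ locRel i → (l0 i).rel r = ∅
  /-- preconditions: FO-formulas over the local schema whose free variables
  are among the action parameters -/
  pre : ∀ i, (sig i).Act → FO D C
  /-- postconditions: FO-formulas over the global schema and its primed copy -/
  post : ∀ i, (sig i).Act → FO D.double C
  pre_free : ∀ i a, ↑(pre i a).free ⊆ { x : ℕ | x < (sig i).np a }
  post_free : ∀ i a, ↑(post i a).free ⊆ { x : ℕ | x < (sig i).np a }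
  pre_loc : ∀ i a, (pre i a).UsesOnly (locRel i)

namespace ACProgram

variable {D : Schema} {C : Type} {n : ℕ} {sig : Fin (n+1) → AgentSig}

/-- The constants mentioned in the program. -/
def progConsts (P : ACProgram D C sig) : Set C :=
  (⋃ i, (P.l0 i).adom) ∪
  ⋃ i, ⋃ a : (sig i).Act, ((P.pre i a).consts ∪ (P.post i a).consts)

/-- Ground values of the postcondition parameters of a joint ground action. -/
def postElems (P : ACProgram D C sig) {U : Type} (a : JAct sig U) : Set U :=
  { u | ∃ (i : Fin (n+1)) (j : Fin ((sig i).np (a i).1)),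
      (j : ℕ) ∈ (P.post i (a i).1).free ∧ (a i).2 j = u }

/-- The agent induced by the program for index `i`. -/
def InducedAgent {U : Type} (cst : C → U) (P : ACProgram D C sig) (i : Fin (n+1))
    (A : Agent D (sig i) U) : Prop :=
  A.L = { l : Inst D U | ∀ r, r ∉ P.locRel i → l.rel r = ∅ } ∧
  ∀ (l : Inst D U) (α : GAct (sig i) U), α ∈ A.Pr l ↔
    ∀ σ : ℕ → U, (∀ j : Fin ((sig i).np α.1), σ (j : ℕ) = α.2 j) →
      FO.sat cst l σ (P.pre i α.1)

/-- The transitions induced by the program. -/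
def InducedTrans {U : Type} (cst : C → U) (P : ACProgram D C sig)
    (s t : GState D n U) (a : JAct sig U) : Prop :=
  (∀ i, ∀ σ : ℕ → U, (∀ j : Fin ((sig i).np (a i).1), σ (j : ℕ) = (a i).2 j) →
      FO.sat cst (s i) σ (P.pre i (a i).1)) ∧
  adomF t ⊆ adomF s ∪ P.postElems a ∪ cst '' (⋃ i, (P.post i (a i).1).consts) ∧
  (∀ i, ∀ σ : ℕ → U, (∀ j : Fin ((sig i).np (a i).1), σ (j : ℕ) = (a i).2 j) →
      FO.sat cst ((gInst s).oplus (gInst t)) σ (P.post i (a i).1))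

/-- `M` is the AC-MAS induced by the program `P` (the transition relation is
assumed to be serial). -/
def InducedACMAS {U : Type} (cst : C → U) (P : ACProgram D C sig)
    (Ag : ∀ i, Agent D (sig i) U) (M : ACMAS D sig Ag) : Prop :=
  (∀ i, P.InducedAgent cst i (Ag i)) ∧
  M.s0 = (fun i => (P.l0 i).map cst) ∧
  (∀ s t a, t ∈ M.τ s a ↔ P.InducedTrans cst s t a) ∧
  M.Std

end ACProgram

/-!
The temporal condition is inherited from the definition of `τ'`: a transition of `P'` is an
isomorphic copy of a transition of `P`, and composing that isomorphism with a witness of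
`s ⊕ t ≃ s' ⊕ t'` exhibits `t' ∈ τ'(s', α⃗(ι'(u⃗)))` in the same way.

The epistemic condition reduces to the closure of the reachable states of `P'` under
isomorphism. This goes by induction on reachability. The initial state contains only constants,
so it is its only isomorphic copy. If `b → c` and `c ≃ z`, the witness of `c ≃ z` extends
injectively to the active domain of `b`: the values outside `adom(c) ∪ C` are sent to fresh
individuals, which exist because `adom(c) ∪ C` and `adom(z) ∪ C` are finite of the same size.
The image `q` of `b` is then reachable by induction, and `q ⊕ z ≃ b ⊕ c`, so `q → z` by the
temporal condition.
-/

theorem Set.InjOn.exists_eqOn_injOn_union {α : Type*} {f : α → α} {s t : Set α}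
    (hf : InjOn f s) (hs : s.Finite) (ht : t.Finite) :
    ∃ g : α → α, EqOn g f s ∧ InjOn g (s ∪ t) := by
  classical
  rcases isEmpty_or_nonempty α with hα | hα
  · exact ⟨f, eqOn_refl f s, fun x => (IsEmpty.false x).elim⟩
  have hcompl : sᶜ.encard = (f '' s)ᶜ.encard := by
    have h := encard_add_encard_compl (f '' s)
    rw [hf.encard_image, ← encard_add_encard_compl s] at h
    exact (WithTop.add_left_cancel hs.encard_lt_top.ne h).symm
  have hle : (t \ s).encard ≤ (f '' s)ᶜ.encard :=
    hcompl ▸ encard_le_encard fun x hx => hx.2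
  obtain ⟨h, hmaps, hinj⟩ := ht.sdiff.exists_injOn_of_encard_le hle
  have heq : EqOn (s.piecewise f h) h (t \ s) :=
    (piecewise_eqOn_compl s f h).mono fun x hx => hx.2
  refine ⟨s.piecewise f h, piecewise_eqOn s f h, ?_⟩
  rw [← union_sdiff_self, injOn_union disjoint_sdiff_right]
  refine ⟨hf.congr (piecewise_eqOn s f h).symm, hinj.congr heq.symm, ?_⟩
  intro x hx y hy hxy
  rw [piecewise_eqOn s f h hx, heq hy] at hxy
  exact hmaps hy (hxy ▸ mem_image_of_mem f hx)

section Instances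

variable {D : Schema} {U V : Type}

theorem Inst.ext_rel {I J : Inst D U} (h : I.rel = J.rel) : I = J := by
  cases I; cases J; simp_all

theorem Inst.adom_finite (I : Inst D U) : I.adom.Finite := by
  refine ((finite_iUnion fun r => (I.finite r).biUnion fun t _ => finite_range t)).subset ?_
  rintro u ⟨r, t, ht, j, rfl⟩
  exact mem_iUnion.2 ⟨r, mem_iUnion₂.2 ⟨t, ht, j, rfl⟩⟩

theorem Inst.adom_map (f : U → V) (I : Inst D U) : (I.map f).adom = f '' I.adom := by
  ext v
  constructor
  · rintro ⟨r, t, ⟨w, hw, rfl⟩, j, rfl⟩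
    exact ⟨w j, ⟨r, w, hw, j, rfl⟩, rfl⟩
  · rintro ⟨u, ⟨r, t, ht, j, rfl⟩, rfl⟩
    exact ⟨r, f ∘ t, ⟨t, ht, rfl⟩, j, rfl⟩

theorem Inst.adom_oplus (I J : Inst D U) : (I.oplus J).adom = I.adom ∪ J.adom := by
  ext u
  constructor
  · rintro ⟨r | r, t, ht, j, rfl⟩
    · exact Or.inl ⟨r, t, ht, j, rfl⟩
    · exact Or.inr ⟨r, t, ht, j, rfl⟩
  · rintro (⟨r, t, ht, j, rfl⟩ | ⟨r, t, ht, j, rfl⟩)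
    · exact ⟨Sum.inl r, t, ht, j, rfl⟩
    · exact ⟨Sum.inr r, t, ht, j, rfl⟩

theorem Inst.map_congr {f g : U → V} {I : Inst D U} (h : EqOn f g I.adom) :
    I.map f = I.map g := by
  refine Inst.ext_rel (funext fun r => image_congr fun t ht => funext fun j => ?_)
  exact h ⟨r, t, ht, j, rfl⟩

theorem Inst.map_id (I : Inst D U) : I.map id = I :=
  Inst.ext_rel (funext fun r => image_id' (I.rel r))

theorem Inst.map_oplus (f : U → V) (I J : Inst D U) :
    (I.oplus J).map f = (I.map f).oplus (J.map f) := by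
  refine Inst.ext_rel (funext fun r => ?_)
  cases r <;> rfl

theorem mem_adomF {X : Type} {s : X → Inst D U} {i : X} {r : D.Rel}
    {t : Fin (D.arity r) → U} (ht : t ∈ (s i).rel r) (j : Fin (D.arity r)) :
    t j ∈ adomF s :=
  mem_iUnion.2 ⟨i, r, t, ht, j, rfl⟩

theorem adomF_finite {X : Type} [Finite X] (s : X → Inst D U) : (adomF s).Finite :=
  finite_iUnion fun i => (s i).adom_finite

theorem adomF_map {X : Type} (f : U → V) (s : X → Inst D U) :
    adomF (fun i => (s i).map f) = f '' adomF s := by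
  simp only [adomF, Inst.adom_map, image_iUnion]

variable {n : ℕ}

theorem adomF_oplusG (s t : GState D n U) : adomF (oplusG s t) = adomF s ∪ adomF t := by
  simp only [adomF, oplusG, Inst.adom_oplus, iUnion_union_distrib]

theorem oplusG_map (f : U → V) (s t : GState D n U) :
    (fun i => (oplusG s t i).map f) = oplusG (fun i => (s i).map f) (fun i => (t i).map f) :=
  funext fun i => Inst.map_oplus f (s i) (t i)

theorem oplusG_inj {s t s' t' : GState D n U} :
    oplusG s t = oplusG s' t' ↔ s = s' ∧ t = t' := by
  refine ⟨fun h => ⟨funext fun i => Inst.ext_rel (funext fun r => ?_),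
    funext fun i => Inst.ext_rel (funext fun r => ?_)⟩, fun h => h.1 ▸ h.2 ▸ rfl⟩
  · exact congrArg (fun I : Inst D.double U => I.rel (Sum.inl r)) (congrFun h i)
  · exact congrArg (fun I : Inst D.double U => I.rel (Sum.inr r)) (congrFun h i)

theorem actElems_finite {sig : Fin (n+1) → AgentSig} (a : JAct sig U) :
    (actElems a).Finite := by
  refine (finite_iUnion fun i => finite_range (a i).2).subset ?_
  rintro u ⟨i, j, rfl⟩
  exact mem_iUnion.2 ⟨i, j, rfl⟩

end Instances

section Witness

variable {D : Schema} {X C U V W : Type} {cst : C → U} {cst' : C → V} {ι : U → V}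
  {s : X → Inst D U} {s' : X → Inst D V}

theorem IsWitness.injOn (h : IsWitness cst cst' ι s s') : InjOn ι (adomF s ∪ range cst) :=
  h.1.injOn

theorem IsWitness.eq_map (h : IsWitness cst cst' ι s s') : s' = fun i => (s i).map ι := by
  funext i
  refine Inst.ext_rel (funext fun r => ?_)
  ext v
  constructor
  · intro hv
    choose w hw hwv using fun j => h.1.surjOn (Or.inl (mem_adomF hv j) :
      v j ∈ adomF s' ∪ range cst')
    refine ⟨w, (h.2.2 i r w hw).2 ?_, funext hwv⟩
    rwa [show (fun j => ι (w j)) = v from funext hwv]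
  · rintro ⟨w, hw, rfl⟩
    exact (h.2.2 i r w fun j => Or.inl (mem_adomF hw j)).1 hw

theorem isWitness_map (hinj : InjOn ι (adomF s ∪ range cst)) (hcst : ∀ c, ι (cst c) = cst' c) :
    IsWitness cst cst' ι s fun i => (s i).map ι := by
  have himage : ι '' (adomF s ∪ range cst) = adomF (fun i => (s i).map ι) ∪ range cst' := by
    rw [image_union, adomF_map, ← range_comp, show ι ∘ cst = cst' from funext hcst]
  refine ⟨himage ▸ hinj.bijOn_image, hcst, fun i r t ht => ⟨fun h => ⟨t, h, rfl⟩, ?_⟩⟩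
  rintro ⟨w, hw, hwt⟩
  have : w = t := funext fun j => hinj (Or.inl (mem_adomF hw j)) (ht j) (congrFun hwt j)
  rwa [← this]

theorem isWitness_iff :
    IsWitness cst cst' ι s s' ↔
      InjOn ι (adomF s ∪ range cst) ∧ (∀ c, ι (cst c) = cst' c) ∧
        s' = fun i => (s i).map ι :=
  ⟨fun h => ⟨h.injOn, h.2.1, h.eq_map⟩, fun ⟨hinj, hcst, h⟩ => h ▸ isWitness_map hinj hcst⟩

theorem IsWitness.comp {cst'' : C → W} {κ : V → W} {s'' : X → Inst D W}
    (h : IsWitness cst cst' ι s s') (h' : IsWitness cst' cst'' κ s' s'') :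
    IsWitness cst cst'' (κ ∘ ι) s s'' := by
  refine ⟨h'.1.comp h.1, fun c => by simp only [Function.comp_apply, h.2.1 c, h'.2.1 c], ?_⟩
  intro i r t ht
  exact (h.2.2 i r t ht).trans (h'.2.2 i r (fun j => ι (t j)) fun j => h.1.mapsTo (ht j))

theorem IsWitness.eq_of_adomF_subset {cst : C → U} {θ : U → U} {s s' : X → Inst D U}
    (h : IsWitness cst cst θ s s') (hs : adomF s ⊆ range cst) : s' = s := by
  have hid : EqOn θ id (adomF s) := by
    intro u hu
    obtain ⟨c, rfl⟩ := hs hu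
    exact h.2.1 c
  rw [h.eq_map]
  exact funext fun i => (Inst.map_congr (hid.mono (subset_iUnion (fun i => (s i).adom) i))).trans (Inst.map_id _)

theorem IsWitness.congr {κ : U → V} (h : IsWitness cst cst' ι s s')
    (heq : EqOn κ ι (adomF s ∪ range cst)) : IsWitness cst cst' κ s s' := by
  obtain ⟨hinj, hcst, rfl⟩ := isWitness_iff.1 h
  refine isWitness_iff.2 ⟨hinj.congr heq.symm, fun c => (heq (Or.inr ⟨c, rfl⟩)).trans (hcst c),
    funext fun i => Inst.map_congr ?_⟩
  exact fun u hu => (heq (Or.inl (mem_iUnion.2 ⟨i, hu⟩))).symm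

variable {n : ℕ} {s t : GState D n U} {s' t' : GState D n V}

theorem IsWitness.oplusG_iff :
    IsWitness cst cst' ι (oplusG s t) (oplusG s' t') ↔
      InjOn ι (adomF s ∪ adomF t ∪ range cst) ∧ IsWitness cst cst' ι s s' ∧
        IsWitness cst cst' ι t t' := by
  simp only [isWitness_iff, adomF_oplusG, oplusG_map, oplusG_inj]
  constructor
  · rintro ⟨hinj, hcst, rfl, rfl⟩
    exact ⟨hinj, ⟨hinj.mono (by intro; aesop), hcst, rfl⟩, hinj.mono (by intro; aesop), hcst, rfl⟩
  · rintro ⟨hinj, ⟨-, hcst, rfl⟩, -, -, rfl⟩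
    exact ⟨hinj, hcst, rfl, rfl⟩

end Witness

section Abstraction

variable {D : Schema} {n : ℕ} {sig : Fin (n+1) → AgentSig} {C U U' : Type}
  {cst : C → U} {cst' : C → U'} {Ag : ∀ i, Agent D (sig i) U}
  {Ag' : ∀ i, Agent D (sig i) U'} {M : ACMAS D sig Ag} {M' : ACMAS D sig Ag'}

theorem IsOAbstraction.adomF_s0_subset (habs : IsOAbstraction cst cst' M M') :
    adomF M'.s0 ⊆ range cst' := by
  obtain ⟨⟨θ, hθ⟩, hs0⟩ := habs.2.1
  rw [hθ.eq_map, adomF_map]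
  rintro _ ⟨u, hu, rfl⟩
  obtain ⟨c, rfl⟩ := hs0 hu
  exact ⟨c, (hθ.2.1 c).symm⟩

theorem IsOAbstraction.mem_tau_map (habs : IsOAbstraction cst cst' M M')
    {s t s' t' : GState D n U'} {a : JAct sig U'} {ι ι' : U' → U'} (ht : t ∈ M'.τ s a)
    (hι : IsWitness cst' cst' ι (oplusG s t) (oplusG s' t'))
    (hext : EqOn ι' ι (adomF (oplusG s t) ∪ range cst'))
    (hinj : InjOn ι' (adomF (oplusG s t) ∪ range cst' ∪ actElems a)) :
    t' ∈ M'.τ s' (JAct.map ι' a) := by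
  obtain ⟨s₀, hs₀, t₀, ht₀, a₀, htr₀, κ, hκ, κ', hκext, hκinj, rfl⟩ := (habs.2.2 s t a).1 ht
  have hmaps : MapsTo κ' (adomF (oplusG s₀ t₀) ∪ range cst ∪ actElems a₀)
      (adomF (oplusG s t) ∪ range cst' ∪ actElems (JAct.map κ' a₀)) := by
    rintro u (hu | ⟨i, j, rfl⟩)
    · exact Or.inl (hκext u hu ▸ hκ.1.mapsTo hu)
    · exact Or.inr ⟨i, j, rfl⟩
  refine (habs.2.2 s' t' _).2
    ⟨s₀, hs₀, t₀, ht₀, a₀, htr₀, ι ∘ κ, hκ.comp hι, ι' ∘ κ', fun u hu => ?_,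
      hinj.comp hκinj hmaps, rfl⟩
  simp only [Function.comp_apply, hκext u hu, hext (hκ.1.mapsTo hu)]

theorem IsOAbstraction.uniformT (habs : IsOAbstraction cst cst' M M') : UniformT cst' M' :=
  fun _ _ _ _ _ _ _ _ ht _ hι _ hext hinj _ => habs.mem_tau_map ht hι hext hinj

theorem IsOAbstraction.mem_S_of_isWitness [Finite C] (habs : IsOAbstraction cst cst' M M')
    (hM' : M'.Std) {y z : GState D n U'} {θ : U' → U'} (hy : y ∈ M'.S)
    (hθ : IsWitness cst' cst' θ y z) : z ∈ M'.S := by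
  rw [hM'.2] at hy
  induction hy generalizing z θ with
  | refl => exact hθ.eq_of_adomF_subset habs.adomF_s0_subset ▸ M'.s0_mem
  | @tail b c _ hbc ih =>
    obtain ⟨a, hc⟩ := hbc
    obtain ⟨g, hgθ, hg⟩ := hθ.injOn.exists_eqOn_injOn_union
      ((adomF_finite c).union (finite_range cst')) (adomF_finite b)
    have hgb : InjOn g (adomF b ∪ range cst') := hg.mono fun u hu => by aesop
    have hbc : IsWitness cst' cst' g (oplusG b c) (oplusG (fun i => (b i).map g) z) :=
      IsWitness.oplusG_iff.2 ⟨hg.mono fun u hu => by aesop,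
        isWitness_map hgb fun c => (hgθ (Or.inr ⟨c, rfl⟩)).trans (hθ.2.1 c), hθ.congr hgθ⟩
    obtain ⟨g', hg'g, hg'⟩ := hbc.injOn.exists_eqOn_injOn_union
      ((adomF_finite _).union (finite_range cst')) (actElems_finite a)
    exact M'.tau_closed _ (ih (isWitness_map hgb hbc.2.1)) _
      (habs.mem_tau_map hc hbc hg'g hg')

theorem IsOAbstraction.uniformE [Finite C] (habs : IsOAbstraction cst cst' M M')
    (hM' : M'.Std) : UniformE cst' M' := by
  rintro s - t - s' hs' t' i ⟨-, ht, hst⟩ ⟨ι, hι⟩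
  obtain ⟨-, hs, ht'⟩ := IsWitness.oplusG_iff.1 hι
  refine ⟨hs', habs.mem_S_of_isWitness hM' ht ht', ?_⟩
  rw [hs.eq_map, ht'.eq_map]
  exact congrArg (Inst.map ι) hst

end Abstraction

theorem statement12_general
    {D : Schema} {C : Type} [Fintype C] {n : ℕ}
    {sig : Fin (n+1) → AgentSig} {U U' : Type}
    (cst : C → U) (cst' : C → U')
    {Ag : ∀ i, Agent D (sig i) U} {Ag' : ∀ i, Agent D (sig i) U'}
    (M : ACMAS D sig Ag) (M' : ACMAS D sig Ag')
    (hM' : M'.Std)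
    (habs : IsOAbstraction cst cst' M M') :
    Uniform cst' M' :=
  ⟨habs.uniformT, habs.uniformE hM'⟩

theorem statement12
    {D : Schema} {C : Type} [Fintype C] {n : ℕ}
    {sig : Fin (n+1) → AgentSig} {U U' : Type}
    (cst : C → U) (cst' : C → U')
    (hcst : Function.Injective cst) (hcst' : Function.Injective cst')
    {Ag : ∀ i, Agent D (sig i) U} {Ag' : ∀ i, Agent D (sig i) U'}
    (M : ACMAS D sig Ag) (M' : ACMAS D sig Ag')
    (hM : M.Std) (hM' : M'.Std)
    (habs : IsOAbstraction cst cst' M M') :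
    Uniform cst' M' :=
  statement12_general cst cst' M M' hM' habs
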